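/- Let O ⊆ ℝ^{n+1} be a nonempty open convex cone contained in the nonnegative orthant [0,∞)^{n+1}, let M > 0, and let F be a subadditive real-valued function on S := (O \ B(0,M)) ∩ ℕ^{n+1} satisfying F(β) ≥ C·|β| on S for some constant C. Define c[F] on O ∩ Σ^0 by c[F](p) := lim_{k→∞} F(α(k))/|α(k)| for any sequence α(k) ∈ S with |α(k)| → ∞ and α(k)/|α(k)| → p (this limit exists and is independent of the sequence). Then c[F] is a convex function on O ∩ Σ^0. -/

import Mathlib

open Set Metric Filter

/-- The image of a vector of natural numbers in Euclidean space. -/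
noncomputable def toR (n : ℕ) (α : Fin (n + 1) → ℕ) : EuclideanSpace ℝ (Fin (n + 1)) :=
  WithLp.toLp 2 (fun i => (α i : ℝ))

/-- The sum of the coordinates of a vector, denoted `|·|` in the paper. -/
noncomputable def coordSum (n : ℕ) (x : EuclideanSpace ℝ (Fin (n + 1))) : ℝ :=
  ∑ i, x i

/-- `Σ^0 := {x ∈ ℝ^{n+1} : |x| = 1, all coordinates strictly positive}`. -/
def Sigma0 (n : ℕ) : Set (EuclideanSpace ℝ (Fin (n + 1))) :=
  {x | (∑ i, x i) = 1 ∧ ∀ i, 0 < x i}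

/-!
If lattice points `α_k ≈ k t p` and `β_k ≈ k s q` lie in `S`, then `α_k + β_k ≈ k (t p + s q)`,
and the subadditivity `F(α_k + β_k) ≤ F(α_k) + F(β_k)`, divided by
`|α_k + β_k| = |α_k| + |β_k| ≈ k`, becomes `c[F](t p + s q) ≤ t c[F](p) + s c[F](q)` in the
limit. Coordinatewise ceilings of `k t p` serve as `α_k`; since `O` is an open cone they lie in
`S` for all large `k`.
-/

open Topology

lemma tendsto_atTop_of_tendsto_div_natCast {v : ℕ → ℝ} {a : ℝ} (ha : 0 < a)
    (hv : Tendsto (fun k : ℕ => v k / k) atTop (𝓝 a)) : Tendsto v atTop atTop := by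
  refine (hv.pos_mul_atTop ha tendsto_natCast_atTop_atTop).congr' ?_
  filter_upwards [eventually_ne_atTop 0] with k hk
  exact div_mul_cancel₀ (v k) (Nat.cast_ne_zero.2 hk)

lemma le_mul_add_mul_of_tendsto_div {fa fb fab ua ub : ℕ → ℝ} {A B L t s : ℝ}
    (ht : 0 < t) (hs : 0 < s) (hts : t + s = 1)
    (hsub : ∀ᶠ k in atTop, fab k ≤ fa k + fb k)
    (hA : Tendsto (fun k => fa k / ua k) atTop (𝓝 A))
    (hB : Tendsto (fun k => fb k / ub k) atTop (𝓝 B))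
    (hL : Tendsto (fun k => fab k / (ua k + ub k)) atTop (𝓝 L))
    (hua : Tendsto (fun k : ℕ => ua k / k) atTop (𝓝 t))
    (hub : Tendsto (fun k : ℕ => ub k / k) atTop (𝓝 s)) :
    L ≤ t * A + s * B := by
  have hsum : Tendsto (fun k : ℕ => (ua k + ub k) / k) atTop (𝓝 1) := by
    simpa [add_div, hts] using hua.add hub
  have weight : ∀ {u : ℕ → ℝ} {r : ℝ}, Tendsto (fun k : ℕ => u k / k) atTop (𝓝 r) →
      Tendsto (fun k => u k / (ua k + ub k)) atTop (𝓝 r) := fun {_ r} hu => by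
    refine (div_one r ▸ hu.div hsum one_ne_zero).congr' ?_
    filter_upwards [eventually_ne_atTop 0] with k hk
    exact div_div_div_cancel_right₀ (Nat.cast_ne_zero.2 hk) _ _
  refine le_of_tendsto_of_tendsto hL (((weight hua).mul hA).add ((weight hub).mul hB)) ?_
  filter_upwards [hsub, hua.eventually_const_lt ht, hub.eventually_const_lt hs,
    eventually_gt_atTop 0] with k hk hka hkb hk0
  have hk0 : (0 : ℝ) < k := Nat.cast_pos.2 hk0
  have ha : 0 < ua k := (div_pos_iff_of_pos_right hk0).1 hka
  have hb : 0 < ub k := (div_pos_iff_of_pos_right hk0).1 hkb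
  calc fab k / (ua k + ub k) ≤ (fa k + fb k) / (ua k + ub k) := by gcongr
    _ = _ := by field_simp

section NormedSpace

variable {E : Type*} [NormedAddCommGroup E] [NormedSpace ℝ E]

lemma tendsto_apply_div_natCast (ℓ : E →L[ℝ] ℝ) {u : ℕ → E} {x : E}
    (hu : Tendsto (fun k : ℕ => (k : ℝ)⁻¹ • u k) atTop (𝓝 x)) :
    Tendsto (fun k : ℕ => ℓ (u k) / k) atTop (𝓝 (ℓ x)) :=
  ((ℓ.continuous.tendsto x).comp hu).congr fun k => by simp [div_eq_inv_mul]

lemma tendsto_norm_atTop_of_tendsto_inv_smul {u : ℕ → E} {x : E} (hx : x ≠ 0)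
    (hu : Tendsto (fun k : ℕ => (k : ℝ)⁻¹ • u k) atTop (𝓝 x)) :
    Tendsto (fun k => ‖u k‖) atTop atTop :=
  tendsto_atTop_of_tendsto_div_natCast (norm_pos_iff.2 hx) <|
    ((continuous_norm.tendsto x).comp hu).congr fun k => by simp [norm_smul, div_eq_inv_mul]

lemma tendsto_inv_apply_smul (ℓ : E →L[ℝ] ℝ) {u : ℕ → E} {x : E} (hx : ℓ x ≠ 0)
    (hu : Tendsto (fun k : ℕ => (k : ℝ)⁻¹ • u k) atTop (𝓝 x)) :
    Tendsto (fun k => (ℓ (u k))⁻¹ • u k) atTop (𝓝 ((ℓ x)⁻¹ • x)) := by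
  refine ((((ℓ.continuous.tendsto x).comp hu).inv₀ hx).smul hu).congr' ?_
  filter_upwards [eventually_ne_atTop 0] with k hk
  have hk : (k : ℝ) ≠ 0 := Nat.cast_ne_zero.2 hk
  simp [smul_smul, hk]

lemma eventually_mem_diff_ball {O : Set E} (hO_open : IsOpen O)
    (hO_cone : ∀ c : ℝ, 0 < c → ∀ x ∈ O, c • x ∈ O) {u : ℕ → E} {x : E} (hxO : x ∈ O)
    (hx : x ≠ 0) (hu : Tendsto (fun k : ℕ => (k : ℝ)⁻¹ • u k) atTop (𝓝 x)) (M : ℝ) :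
    ∀ᶠ k in atTop, u k ∈ O \ ball 0 M := by
  filter_upwards [hu.eventually (hO_open.mem_nhds hxO), eventually_gt_atTop 0,
    (tendsto_norm_atTop_of_tendsto_inv_smul hx hu).eventually_ge_atTop M] with k hkO hk hkM
  refine ⟨?_, by simpa using hkM⟩
  have hk : (0 : ℝ) < k := Nat.cast_pos.2 hk
  simpa [smul_smul, hk.ne'] using hO_cone k hk _ hkO

end NormedSpace

section Euclidean

variable {n : ℕ}

noncomputable def coordSumL (n : ℕ) : EuclideanSpace ℝ (Fin (n + 1)) →L[ℝ] ℝ :=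
  ∑ i, EuclideanSpace.proj i

@[simp]
lemma coordSumL_apply (x : EuclideanSpace ℝ (Fin (n + 1))) : coordSumL n x = coordSum n x := by
  simp [coordSumL, coordSum]

lemma coordSumL_smul_of_mem_sigma0 {p : EuclideanSpace ℝ (Fin (n + 1))} (hp : p ∈ Sigma0 n)
    (r : ℝ) : coordSumL n (r • p) = r := by
  simp [coordSum, hp.1]

lemma toR_add (α β : Fin (n + 1) → ℕ) : toR n (α + β) = toR n α + toR n β := by
  ext i; simp [toR]

lemma coordSum_toR_add (α β : Fin (n + 1) → ℕ) :
    coordSum n (toR n (α + β)) = coordSum n (toR n α) + coordSum n (toR n β) := by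
  simp [coordSum, toR, Finset.sum_add_distrib]

lemma convex_sigma0 (n : ℕ) : Convex ℝ (Sigma0 n) := by
  rintro x ⟨hx1, hx⟩ y ⟨hy1, hy⟩ a b ha hb hab
  refine ⟨by simp [Finset.sum_add_distrib, ← Finset.mul_sum, hx1, hy1, hab], fun i => ?_⟩
  simp only [PiLp.add_apply, PiLp.smul_apply, smul_eq_mul]
  rcases ha.eq_or_lt with rfl | ha
  · simp [show b = 1 by linarith, hy i]
  · exact add_pos_of_pos_of_nonneg (mul_pos ha (hx i)) (mul_nonneg hb (hy i).le)

noncomputable def latticeApprox (x : EuclideanSpace ℝ (Fin (n + 1))) (k : ℕ) : Fin (n + 1) → ℕ :=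
  fun i => ⌈x i * k⌉₊

lemma tendsto_inv_smul_toR_latticeApprox {x : EuclideanSpace ℝ (Fin (n + 1))}
    (hx : ∀ i, 0 ≤ x i) :
    Tendsto (fun k : ℕ => (k : ℝ)⁻¹ • toR n (latticeApprox x k)) atTop (𝓝 x) := by
  have h : ∀ i, Tendsto (fun k : ℕ => (⌈x i * k⌉₊ : ℝ) / k) atTop (𝓝 (x i)) := fun i =>
    (tendsto_nat_ceil_mul_div_atTop (hx i)).comp tendsto_natCast_atTop_atTop
  refine (((PiLp.continuous_toLp 2 _).tendsto _).comp (tendsto_pi_nhds.2 h)).congr fun k => ?_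
  ext i
  simp [toR, latticeApprox, div_eq_inv_mul]

end Euclidean

def IsChebyshevTransform (n : ℕ) (O : Set (EuclideanSpace ℝ (Fin (n + 1)))) (M : ℝ)
    (F : (Fin (n + 1) → ℕ) → ℝ) (c : EuclideanSpace ℝ (Fin (n + 1)) → ℝ) : Prop :=
  ∀ p ∈ O ∩ Sigma0 n, ∀ α : ℕ → (Fin (n + 1) → ℕ),
    (∀ k, toR n (α k) ∈ O \ ball 0 M) →
    Tendsto (fun k => coordSum n (toR n (α k))) atTop atTop →
    Tendsto (fun k => (coordSum n (toR n (α k)))⁻¹ • toR n (α k)) atTop (𝓝 p) →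
    Tendsto (fun k => F (α k) / coordSum n (toR n (α k))) atTop (𝓝 (c p))

namespace IsChebyshevTransform

variable {n : ℕ} {O : Set (EuclideanSpace ℝ (Fin (n + 1)))} {M : ℝ}
  {F : (Fin (n + 1) → ℕ) → ℝ} {c : EuclideanSpace ℝ (Fin (n + 1)) → ℝ}

lemma tendsto_of_eventually (hc : IsChebyshevTransform n O M F c) {p} (hp : p ∈ O ∩ Sigma0 n)
    {α : ℕ → (Fin (n + 1) → ℕ)} (hmem : ∀ᶠ k in atTop, toR n (α k) ∈ O \ ball 0 M)
    (hsum : Tendsto (fun k => coordSum n (toR n (α k))) atTop atTop)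
    (hdir : Tendsto (fun k => (coordSum n (toR n (α k)))⁻¹ • toR n (α k)) atTop (𝓝 p)) :
    Tendsto (fun k => F (α k) / coordSum n (toR n (α k))) atTop (𝓝 (c p)) := by
  obtain ⟨K, hK⟩ := eventually_atTop.1 hmem
  rw [← tendsto_add_atTop_iff_nat K] at hsum hdir ⊢
  exact hc p hp (fun k => α (k + K)) (fun k => hK _ (Nat.le_add_left K k)) hsum hdir

lemma tendsto_of_tendsto_inv_smul (hc : IsChebyshevTransform n O M F c) (hO_open : IsOpen O)
    (hO_cone : ∀ c : ℝ, 0 < c → ∀ x ∈ O, c • x ∈ O) {p} (hp : p ∈ O ∩ Sigma0 n) {r : ℝ}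
    (hr : 0 < r) {α : ℕ → (Fin (n + 1) → ℕ)}
    (hα : Tendsto (fun k : ℕ => (k : ℝ)⁻¹ • toR n (α k)) atTop (𝓝 (r • p))) :
    (∀ᶠ k in atTop, toR n (α k) ∈ O \ ball 0 M) ∧
      Tendsto (fun k => F (α k) / coordSum n (toR n (α k))) atTop (𝓝 (c p)) := by
  have hsum_r : coordSumL n (r • p) = r := coordSumL_smul_of_mem_sigma0 hp.2 r
  have hrp : r • p ≠ 0 := fun h => hr.ne' (by rw [← hsum_r, h, map_zero])
  have hmem := eventually_mem_diff_ball hO_open hO_cone (hO_cone r hr p hp.1) hrp hα M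
  refine ⟨hmem, hc.tendsto_of_eventually hp hmem ?_ ?_⟩
  · refine tendsto_atTop_of_tendsto_div_natCast hr ?_
    simpa [hsum_r] using tendsto_apply_div_natCast (coordSumL n) hα
  · simpa [hsum_r, smul_smul, hr.ne'] using
      tendsto_inv_apply_smul (coordSumL n) (by rw [hsum_r]; exact hr.ne') hα

end IsChebyshevTransform

theorem chebyshev_transform_convexOn_general (n : ℕ) (O : Set (EuclideanSpace ℝ (Fin (n + 1))))
    (hO_open : IsOpen O) (hO_conv : Convex ℝ O)
    (hO_cone : ∀ c : ℝ, 0 < c → ∀ x ∈ O, c • x ∈ O)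
    (M : ℝ)
    (F : (Fin (n + 1) → ℕ) → ℝ)
    (hsub : ∀ α β : Fin (n + 1) → ℕ, toR n α ∈ O \ ball 0 M → toR n β ∈ O \ ball 0 M →
      F (α + β) ≤ F α + F β)
    (c : EuclideanSpace ℝ (Fin (n + 1)) → ℝ)
    (hc : ∀ p ∈ O ∩ Sigma0 n, ∀ α : ℕ → (Fin (n + 1) → ℕ),
      (∀ k, toR n (α k) ∈ O \ ball 0 M) →
      Tendsto (fun k => coordSum n (toR n (α k))) atTop atTop →
      Tendsto (fun k => (coordSum n (toR n (α k)))⁻¹ • toR n (α k)) atTop (nhds p) →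
      Tendsto (fun k => F (α k) / coordSum n (toR n (α k))) atTop (nhds (c p))) :
    ConvexOn ℝ (O ∩ Sigma0 n) c := by
  have hc : IsChebyshevTransform n O M F c := hc
  have hdom : Convex ℝ (O ∩ Sigma0 n) := hO_conv.inter (convex_sigma0 n)
  refine ⟨hdom, fun p hp q hq t s ht hs hts => ?_⟩
  rcases ht.eq_or_lt with rfl | ht
  · simp [show s = 1 by linarith]
  rcases hs.eq_or_lt with rfl | hs
  · simp [show t = 1 by linarith]
  have ha := tendsto_inv_smul_toR_latticeApprox (x := t • p) fun i => by
    simpa using mul_nonneg ht.le (hp.2.2 i).le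
  have hb := tendsto_inv_smul_toR_latticeApprox (x := s • q) fun i => by
    simpa using mul_nonneg hs.le (hq.2.2 i).le
  have hab : Tendsto (fun k : ℕ => (k : ℝ)⁻¹ •
      toR n (latticeApprox (t • p) k + latticeApprox (s • q) k)) atTop
      (𝓝 ((1 : ℝ) • (t • p + s • q))) := by
    simpa [toR_add, smul_add] using ha.add hb
  obtain ⟨hSa, hFa⟩ := hc.tendsto_of_tendsto_inv_smul hO_open hO_cone hp ht ha
  obtain ⟨hSb, hFb⟩ := hc.tendsto_of_tendsto_inv_smul hO_open hO_cone hq hs hb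
  obtain ⟨-, hFab⟩ := hc.tendsto_of_tendsto_inv_smul hO_open hO_cone
    (hdom hp hq ht.le hs.le hts) one_pos hab
  simp only [coordSum_toR_add] at hFab
  refine le_mul_add_mul_of_tendsto_div ht hs hts ?_ hFa hFb hFab ?_ ?_
  · filter_upwards [hSa, hSb] with k hka hkb using hsub _ _ hka hkb
  · simpa [coordSumL_smul_of_mem_sigma0 hp.2] using tendsto_apply_div_natCast (coordSumL n) ha
  · simpa [coordSumL_smul_of_mem_sigma0 hq.2] using tendsto_apply_div_natCast (coordSumL n) hb

/-- The function `c[F]` defined by the limits `F(α(k))/|α(k)|` is convex on `O ∩ Σ^0`. -/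
theorem chebyshev_transform_convexOn (n : ℕ) (O : Set (EuclideanSpace ℝ (Fin (n + 1))))
    (hO_open : IsOpen O) (hO_conv : Convex ℝ O) (hO_ne : O.Nonempty)
    (hO_orth : O ⊆ {x | ∀ i, 0 ≤ x i})
    (hO_cone : ∀ c : ℝ, 0 < c → ∀ x ∈ O, c • x ∈ O)
    (M : ℝ) (hM : 0 < M)
    (F : (Fin (n + 1) → ℕ) → ℝ)
    (hsub : ∀ α β : Fin (n + 1) → ℕ, toR n α ∈ O \ ball 0 M → toR n β ∈ O \ ball 0 M →
      F (α + β) ≤ F α + F β)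
    (C : ℝ)
    (hlow : ∀ β : Fin (n + 1) → ℕ, toR n β ∈ O \ ball 0 M →
      C * coordSum n (toR n β) ≤ F β)
    (c : EuclideanSpace ℝ (Fin (n + 1)) → ℝ)
    (hc : ∀ p ∈ O ∩ Sigma0 n, ∀ α : ℕ → (Fin (n + 1) → ℕ),
      (∀ k, toR n (α k) ∈ O \ ball 0 M) →
      Tendsto (fun k => coordSum n (toR n (α k))) atTop atTop →
      Tendsto (fun k => (coordSum n (toR n (α k)))⁻¹ • toR n (α k)) atTop (nhds p) →
      Tendsto (fun k => F (α k) / coordSum n (toR n (α k))) atTop (nhds (c p))) :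
    ConvexOn ℝ (O ∩ Sigma0 n) c :=
  chebyshev_transform_convexOn_general n O hO_open hO_conv hO_cone M F hsub c hc
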